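/- arXiv:1912.00516 — 2 statements merged into one kernel-verified Lean document; each statement's English description precedes it below -/
import Mathlib

section
/- If a (theta, wheel)-free graph G has a star cutset, then G has a clique cutset. -/
open SimpleGraph

universe u

variable {V : Type u}

/-- A hole: a chordless cycle of length at least 4. -/
def IsHole (G : SimpleGraph V) {v : V} (c : G.Walk v v) : Prop :=
  c.IsCycle ∧ 4 ≤ c.length ∧
    ∀ x ∈ c.support, ∀ y ∈ c.support, G.Adj x y → s(x, y) ∈ c.edges

/-- There is a hole of `G` passing through both `u` and `v`. -/
def HasHoleThrough (G : SimpleGraph V) (u v : V) : Prop :=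
  ∃ (w : V) (c : G.Walk w w), IsHole G c ∧ u ∈ c.support ∧ v ∈ c.support

/-- `G` contains a theta as an induced subgraph: three internally vertex-disjoint
paths of length at least 2 between two distinct vertices, with no further edges
among the vertices of the three paths. -/
def ContainsTheta (G : SimpleGraph V) : Prop :=
  ∃ (a b : V) (P₁ P₂ P₃ : G.Walk a b),
    a ≠ b ∧ P₁.IsPath ∧ P₂.IsPath ∧ P₃.IsPath ∧
    2 ≤ P₁.length ∧ 2 ≤ P₂.length ∧ 2 ≤ P₃.length ∧
    (∀ x ∈ P₁.support, x ∈ P₂.support → x = a ∨ x = b) ∧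
    (∀ x ∈ P₁.support, x ∈ P₃.support → x = a ∨ x = b) ∧
    (∀ x ∈ P₂.support, x ∈ P₃.support → x = a ∨ x = b) ∧
    (∀ x y : V, (x ∈ P₁.support ∨ x ∈ P₂.support ∨ x ∈ P₃.support) →
      (y ∈ P₁.support ∨ y ∈ P₂.support ∨ y ∈ P₃.support) → G.Adj x y →
      s(x, y) ∈ P₁.edges ∨ s(x, y) ∈ P₂.edges ∨ s(x, y) ∈ P₃.edges)

/-- `G` contains a wheel as an induced subgraph: a hole together with a vertex
having at least 3 neighbors on the hole. -/
def ContainsWheel (G : SimpleGraph V) : Prop :=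
  ∃ (w : V) (c : G.Walk w w) (x y₁ y₂ y₃ : V),
    IsHole G c ∧ x ∉ c.support ∧
    y₁ ∈ c.support ∧ y₂ ∈ c.support ∧ y₃ ∈ c.support ∧
    y₁ ≠ y₂ ∧ y₁ ≠ y₃ ∧ y₂ ≠ y₃ ∧ G.Adj x y₁ ∧ G.Adj x y₂ ∧ G.Adj x y₃

/-- `G` contains a diamond (K₄ minus an edge) as an induced subgraph. -/
def ContainsDiamond (G : SimpleGraph V) : Prop :=
  ∃ a b c d : V, a ≠ b ∧ a ≠ c ∧ a ≠ d ∧ b ≠ c ∧ b ≠ d ∧ c ≠ d ∧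
    ¬ G.Adj a b ∧ G.Adj a c ∧ G.Adj a d ∧ G.Adj b c ∧ G.Adj b d ∧ G.Adj c d

/-- `G` contains a claw (K_{1,3}) as an induced subgraph. -/
def ContainsClaw (G : SimpleGraph V) : Prop :=
  ∃ u v₁ v₂ v₃ : V, v₁ ≠ v₂ ∧ v₁ ≠ v₃ ∧ v₂ ≠ v₃ ∧
    G.Adj u v₁ ∧ G.Adj u v₂ ∧ G.Adj u v₃ ∧
    ¬ G.Adj v₁ v₂ ∧ ¬ G.Adj v₁ v₃ ∧ ¬ G.Adj v₂ v₃

/-- `(A, K, B)` is a split witnessing that `K` is a cutset of `G`: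
`A` and `B` are nonempty, the three sets partition the vertex set,
and there are no edges between `A` and `B`. -/
def IsCutsetSplit (G : SimpleGraph V) (A K B : Set V) : Prop :=
  A.Nonempty ∧ B.Nonempty ∧ Disjoint A K ∧ Disjoint A B ∧ Disjoint K B ∧
    A ∪ K ∪ B = Set.univ ∧ ∀ a ∈ A, ∀ b ∈ B, ¬ G.Adj a b

/-- `G` has a clique cutset. -/
def HasCliqueCutset (G : SimpleGraph V) : Prop :=
  ∃ K A B : Set V, G.IsClique K ∧ IsCutsetSplit G A K B

/-- Some clique cutset of `G` separates `u` and `v`. -/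
def CliqueCutsetSeparates (G : SimpleGraph V) (u v : V) : Prop :=
  ∃ K A B : Set V, G.IsClique K ∧ IsCutsetSplit G A K B ∧ u ∈ A ∧ v ∈ B

/-- `G` has a star cutset: a nonempty cutset containing a vertex adjacent to
all other vertices of the cutset. -/
def HasStarCutset (G : SimpleGraph V) : Prop :=
  ∃ S A B : Set V, S.Nonempty ∧ IsCutsetSplit G A S B ∧
    ∃ x ∈ S, ∀ y ∈ S, y ≠ x → G.Adj x y

/-- `u` and `v` are joined by a walk all of whose vertices lie in `X`. -/
def ReachableWithin (G : SimpleGraph V) (X : Set V) (u v : V) : Prop :=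
  ∃ p : G.Walk u v, ∀ x ∈ p.support, x ∈ X

/-- `C` is a connected component of the subgraph of `G` induced by `X`. -/
def IsCompOf (G : SimpleGraph V) (X C : Set V) : Prop :=
  C.Nonempty ∧ C ⊆ X ∧ (∀ u ∈ C, ∀ v ∈ C, ReachableWithin G X u v) ∧
    ∀ u ∈ C, ∀ v ∈ X, G.Adj u v → v ∈ C

/-- The subgraph of `G` induced by `A` is a disjoint union of cliques. -/
def UnionOfCliques (G : SimpleGraph V) (A : Set V) : Prop :=
  ∀ x ∈ A, ∀ y ∈ A, ∀ z ∈ A, G.Adj x y → G.Adj y z → x ≠ z → G.Adj x z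

/-- `(X₁, X₂, A₁, A₂, B₁, B₂)` is a split of an almost 2-join of `G`. -/
def AlmostTwoJoinSplit (G : SimpleGraph V) (X₁ X₂ A₁ A₂ B₁ B₂ : Set V) : Prop :=
  Disjoint X₁ X₂ ∧ X₁ ∪ X₂ = Set.univ ∧ 3 ≤ X₁.ncard ∧ 3 ≤ X₂.ncard ∧
  A₁.Nonempty ∧ B₁.Nonempty ∧ A₂.Nonempty ∧ B₂.Nonempty ∧
  A₁ ⊆ X₁ ∧ B₁ ⊆ X₁ ∧ A₂ ⊆ X₂ ∧ B₂ ⊆ X₂ ∧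
  Disjoint A₁ B₁ ∧ Disjoint A₂ B₂ ∧
  (∀ a ∈ A₁, ∀ b ∈ A₂, G.Adj a b) ∧
  (∀ a ∈ B₁, ∀ b ∈ B₂, G.Adj a b) ∧
  (∀ x ∈ X₁, ∀ y ∈ X₂, G.Adj x y → (x ∈ A₁ ∧ y ∈ A₂) ∨ (x ∈ B₁ ∧ y ∈ B₂))

/-- The subgraph of `G` induced by `X` is a chordless path. -/
def InducesPath (G : SimpleGraph V) (X : Set V) : Prop :=
  ∃ (u v : V) (p : G.Walk u v), p.IsPath ∧ (∀ x : V, x ∈ p.support ↔ x ∈ X) ∧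
    ∀ x ∈ X, ∀ y ∈ X, G.Adj x y → s(x, y) ∈ p.edges

/-- `(X₁, X₂, A₁, A₂, B₁, B₂)` is a split of a 2-join of `G`. -/
def TwoJoinSplit (G : SimpleGraph V) (X₁ X₂ A₁ A₂ B₁ B₂ : Set V) : Prop :=
  AlmostTwoJoinSplit G X₁ X₂ A₁ A₂ B₁ B₂ ∧
  (∃ a ∈ A₁, ∃ b ∈ B₁, ReachableWithin G X₁ a b) ∧
  (∃ a ∈ A₂, ∃ b ∈ B₂, ReachableWithin G X₂ a b) ∧
  (A₁.ncard = 1 → B₁.ncard = 1 → ¬ InducesPath G X₁) ∧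
  (A₂.ncard = 1 → B₂.ncard = 1 → ¬ InducesPath G X₂)

/-- `(X₁, X₂, A₁, A₂, B₁, B₂)` is a split of a minimally-sided 2-join of `G`,
with `X₁` a minimal side. -/
def MinimallySidedTwoJoin (G : SimpleGraph V) (X₁ X₂ A₁ A₂ B₁ B₂ : Set V) : Prop :=
  TwoJoinSplit G X₁ X₂ A₁ A₂ B₁ B₂ ∧
  ∀ Y₁ Y₂ C₁ C₂ D₁ D₂ : Set V, TwoJoinSplit G Y₁ Y₂ C₁ C₂ D₁ D₂ →
    ¬ Y₁ ⊂ X₁ ∧ ¬ Y₂ ⊂ X₁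

/-- Conditions (i)–(iii) and (vi)–(viii) of consistency of an almost 2-join,
for the side `X` with special sets `A` and `B`. -/
def ConsistentSide (G : SimpleGraph V) (X A B : Set V) : Prop :=
  (∀ C : Set V, IsCompOf G X C → (C ∩ A).Nonempty ∧ (C ∩ B).Nonempty) ∧
  (∀ a ∈ A, ∃ b ∈ B, ¬ G.Adj a b) ∧
  (∀ b ∈ B, ∃ a ∈ A, ¬ G.Adj b a) ∧
  (∀ u ∈ X, ∀ v ∈ X, ReachableWithin G X u v) ∧
  (∀ v ∈ X, ∃ b ∈ B, ∃ p : G.Walk v b, p.IsPath ∧ (∀ x ∈ p.support, x ∈ X) ∧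
    ∀ x ∈ p.support, x ∈ A → x = v ∨ x = b) ∧
  (∀ v ∈ X, ∃ a ∈ A, ∃ p : G.Walk v a, p.IsPath ∧ (∀ x ∈ p.support, x ∈ X) ∧
    ∀ x ∈ p.support, x ∈ B → x = v ∨ x = a)

/-- The block of decomposition of `G` with respect to a 2-join, keeping the side `X`
(with special sets `A`, `B`) and replacing the other side by a marker path of
length `k` whose endpoint `0` is complete to `A` and endpoint `k` is complete to `B`. -/
def TwoJoinBlock (G : SimpleGraph V) (X A B : Set V) (k : ℕ) :
    SimpleGraph (↥X ⊕ Fin (k + 1)) where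
  Adj x y :=
    match x, y with
    | Sum.inl a, Sum.inl b => G.Adj ↑a ↑b
    | Sum.inl a, Sum.inr i => ((a : V) ∈ A ∧ i = 0) ∨ ((a : V) ∈ B ∧ i = Fin.last k)
    | Sum.inr i, Sum.inl a => ((a : V) ∈ A ∧ i = 0) ∨ ((a : V) ∈ B ∧ i = Fin.last k)
    | Sum.inr i, Sum.inr j => (i : ℕ) + 1 = (j : ℕ) ∨ (j : ℕ) + 1 = (i : ℕ)
  symm := by
    refine ⟨?_⟩
    rintro (a | i) (b | j) h
    · exact h.symm
    · exact h
    · exact h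
    · exact Or.symm h
  loopless := by
    refine ⟨?_⟩
    rintro (a | i) h
    · exact G.irrefl h
    · rcases h with h | h <;> omega

/-- A graph is chordless if no cycle in it has a chord. -/
def ChordlessGraph (G : SimpleGraph V) : Prop :=
  ∀ (u : V) (c : G.Walk u u), c.IsCycle →
    ∀ x ∈ c.support, ∀ y ∈ c.support, G.Adj x y → s(x, y) ∈ c.edges

/-- The subgraph of `G` induced by `S` has a clique cutset. -/
def HasCliqueCutsetOn (G : SimpleGraph V) (S : Set V) : Prop :=
  ∃ K A B : Set V, G.IsClique K ∧ A.Nonempty ∧ B.Nonempty ∧ Disjoint A K ∧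
    Disjoint A B ∧ Disjoint K B ∧ A ∪ K ∪ B = S ∧ ∀ a ∈ A, ∀ b ∈ B, ¬ G.Adj a b

/-- The total weight of a set of vertices. -/
noncomputable def wsum [Fintype V] (w : V → ℕ) (A : Set V) : ℕ :=
  ∑ v ∈ A.toFinite.toFinset, w v

/-!
Take a star cutset `S` with centre `x` that is minimal under inclusion, with sides `A` and `B`.
If `y, z ∈ S \ {x}` were non-adjacent, then by minimality neither `S \ {y}` nor `S \ {z}` is a
cutset, so `y` and `z` both have neighbours in one component of `G[A]` and in one component of
`G[B]`. Shortest `y`–`z` paths through `A` and through `B` are chordless and together form a hole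
on which `x` sees `y` and `z`: a third neighbour of `x` on the hole gives a wheel, and otherwise
the path `y x z` completes a theta. Hence `S` is a clique.
-/

namespace SimpleGraph.Walk

variable {G : SimpleGraph V} {y z : V}

lemma two_le_length_of_not_adj : ∀ (p : G.Walk y z), y ≠ z → ¬ G.Adj y z → 2 ≤ p.length
  | .nil, hne, _ => absurd rfl hne
  | .cons h .nil, _, hyz => absurd h hyz
  | .cons _ (.cons _ _), _, _ => by simp

lemma isChordless_of_forall_length_le [DecidableEq V] (w : G.Walk y z)
    (hmin : ∀ q : G.Walk y z, q.support ⊆ w.support → w.length ≤ q.length) : w.IsChordless := by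
  induction w with
  | nil => simp [isChordless_iff_forall_mem_edges]
  | @cons y c z h w' ih =>
    have hmin' : ∀ q : G.Walk c z, q.support ⊆ w'.support → w'.length ≤ q.length := by
      intro q hq
      simpa using hmin (.cons h q) (List.cons_subset_cons _ hq)
    have hstart : ∀ b ∈ w'.support, G.Adj y b → s(y, b) ∈ (cons h w').edges := by
      intro b hb hyb
      obtain rfl | hcb := eq_or_ne c b
      · simp
      · have hshort := hmin (.cons hyb (w'.dropUntil b hb))
          (List.cons_subset_cons _ (w'.support_dropUntil_subset_support hb))
        have hsplit := congrArg length (w'.take_spec hb)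
        simp only [length_append, length_cons] at hsplit hshort
        exact absurd (eq_of_length_eq_zero (by omega : (w'.takeUntil b hb).length = 0)) hcb
    rw [isChordless_iff_forall_mem_edges]
    intro a b ha hb hab
    simp only [support_cons, List.mem_cons] at ha hb
    rcases ha with rfl | ha <;> rcases hb with rfl | hb
    · exact absurd hab (G.irrefl)
    · exact hstart b hb hab
    · rw [Sym2.eq_swap]; exact hstart a ha hab.symm
    · exact List.mem_cons_of_mem _ ((ih hmin').mem_edges ha hb hab)

end SimpleGraph.Walk

open SimpleGraph

variable {G : SimpleGraph V}

section ReachableWithin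

variable {X Y : Set V} {u v w : V}

lemma ReachableWithin.refl (hu : u ∈ X) : ReachableWithin G X u u :=
  ⟨.nil, by simpa using hu⟩

lemma ReachableWithin.mem_right (h : ReachableWithin G X u v) : v ∈ X :=
  h.choose_spec v h.choose.end_mem_support

lemma ReachableWithin.symm (h : ReachableWithin G X u v) : ReachableWithin G X v u := by
  obtain ⟨p, hp⟩ := h
  exact ⟨p.reverse, by simpa using hp⟩

lemma ReachableWithin.trans (huv : ReachableWithin G X u v) (hvw : ReachableWithin G X v w) :
    ReachableWithin G X u w := by
  obtain ⟨p, hp⟩ := huv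
  obtain ⟨q, hq⟩ := hvw
  refine ⟨p.append q, fun x hx => ?_⟩
  rcases Walk.mem_support_append_iff p q |>.mp hx with hx | hx
  exacts [hp x hx, hq x hx]

lemma ReachableWithin.trans_adj (h : ReachableWithin G X u v) (hvw : G.Adj v w) (hw : w ∈ X) :
    ReachableWithin G X u w :=
  h.trans ⟨hvw.toWalk, by simpa using ⟨h.mem_right, hw⟩⟩

lemma ReachableWithin.mono (h : ReachableWithin G X u v) (hXY : X ⊆ Y) :
    ReachableWithin G Y u v := by
  obtain ⟨p, hp⟩ := h
  exact ⟨p, fun x hx => hXY (hp x hx)⟩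

lemma ReachableWithin.exists_isPath_isChordless (h : ReachableWithin G X u v) :
    ∃ p : G.Walk u v, p.IsPath ∧ p.IsChordless ∧ ∀ x ∈ p.support, x ∈ X := by
  classical
  obtain ⟨w, ⟨hwX, hw⟩⟩ := exists_minimalFor_of_wellFoundedLT
    (fun p : G.Walk u v => ∀ x ∈ p.support, x ∈ X) Walk.length h
  have hbyX : ∀ x ∈ w.bypass.support, x ∈ X := fun x hx =>
    hwX x (w.support_bypass_subset_support hx)
  refine ⟨w.bypass, w.bypass_isPath, ?_, hbyX⟩
  refine w.bypass.isChordless_of_forall_length_le fun q hq => ?_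
  have hqX : ∀ x ∈ q.support, x ∈ X := fun x hx => hbyX x (hq hx)
  have := w.length_bypass_le_length
  by_contra! hlt
  have := hw hqX (by omega)
  omega

end ReachableWithin

section Cutset

variable {A B K S : Set V} {a t y z : V}

lemma IsCutsetSplit.symm (h : IsCutsetSplit G A K B) : IsCutsetSplit G B K A := by
  obtain ⟨hA, hB, hAK, hAB, hKB, huniv, hno⟩ := h
  refine ⟨hB, hA, hKB.symm, hAB.symm, hAK.symm, ?_, fun b hb a ha hba => hno a ha b hb hba.symm⟩
  rw [← huniv]; ac_rfl

lemma reachableWithin_compl_of_not_isCutset {T : Set V} (hT : ¬ ∃ A B, IsCutsetSplit G A T B)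
    {u v : V} (hu : u ∉ T) (hv : v ∉ T) : ReachableWithin G Tᶜ u v := by
  by_contra huv
  set C := {w | ReachableWithin G Tᶜ u w}
  have hCT : C ⊆ C ∪ T := Set.subset_union_left
  refine hT ⟨C, (C ∪ T)ᶜ, ⟨u, .refl hu⟩, ⟨v, by simp [C, huv, hv]⟩,
    Set.disjoint_left.mpr fun w hw => hw.mem_right, disjoint_compl_right.mono_right
      (Set.compl_subset_compl.mpr hCT), disjoint_compl_right.mono_left Set.subset_union_right,
    Set.union_compl_self _, fun w hw w' hw' hadj => ?_⟩
  have hw'T : w' ∉ T := fun h => hw' (Or.inr h)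
  exact hw' (Or.inl (hw.trans_adj hadj hw'T))

lemma IsCutsetSplit.exists_adj_of_not_isCutset_diff (hsplit : IsCutsetSplit G A S B) (ha : a ∈ A)
    (hnot : ¬ ∃ A' B', IsCutsetSplit G A' (S \ {t}) B') :
    ∃ u, ReachableWithin G A a u ∧ G.Adj u t := by
  obtain ⟨-, ⟨b, hb⟩, hAS, hAB, hSB, huniv, hno⟩ := hsplit
  obtain ⟨w, hw⟩ := reachableWithin_compl_of_not_isCutset hnot
    (fun h => Set.disjoint_left.mp hAS ha h.1) (fun h => Set.disjoint_right.mp hSB hb h.1)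
  obtain ⟨d, hd, hfst, hsnd⟩ := w.exists_boundary_dart {u | ReachableWithin G A a u} (.refl ha)
    fun h => Set.disjoint_left.mp hAB h.mem_right hb
  refine ⟨d.fst, hfst, ?_⟩
  suffices d.snd = t from this ▸ d.adj
  by_contra hne
  have hsndS : d.snd ∉ S := fun h => hw _ (w.dart_snd_mem_support_of_mem_darts hd) ⟨h, hne⟩
  have hsnd_mem : d.snd ∈ A ∪ S ∪ B := huniv ▸ Set.mem_univ _
  rcases hsnd_mem with (hA | hS) | hB
  · exact hsnd (hfst.trans_adj d.adj hA)
  · exact hsndS hS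
  · exact hno _ hfst.mem_right _ hB d.adj

lemma IsCutsetSplit.reachableWithin_insert_insert (hsplit : IsCutsetSplit G A S B)
    (hy : ¬ ∃ A' B', IsCutsetSplit G A' (S \ {y}) B')
    (hz : ¬ ∃ A' B', IsCutsetSplit G A' (S \ {z}) B') :
    ReachableWithin G (insert y (insert z A)) y z := by
  obtain ⟨a, ha⟩ := hsplit.1
  obtain ⟨u, hau, huy⟩ := hsplit.exists_adj_of_not_isCutset_diff ha hy
  obtain ⟨v, hav, hvz⟩ := hsplit.exists_adj_of_not_isCutset_diff ha hz
  have hA : A ⊆ insert y (insert z A) := (Set.subset_insert _ _).trans (Set.subset_insert _ _)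
  have huz := ((hau.symm.trans hav).mono hA).trans_adj hvz (by simp)
  exact (huz.symm.trans_adj huy (by simp)).symm

end Cutset

section Hole

variable {x y z : V} {P₁ P₂ : G.Walk y z}

lemma isHole_append_reverse (hP₁ : P₁.IsPath) (hP₂ : P₂.IsPath) (hc₁ : P₁.IsChordless)
    (hc₂ : P₂.IsChordless) (hne : y ≠ z) (hyz : ¬ G.Adj y z)
    (hmeet : ∀ v ∈ P₁.support, v ∈ P₂.support → v = y ∨ v = z)
    (hcross : ∀ u ∈ P₁.support, ∀ v ∈ P₂.support, G.Adj u v →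
      u ∈ P₂.support ∨ v ∈ P₁.support) :
    IsHole G (P₁.append P₂.reverse) := by
  have hl₁ := P₁.two_le_length_of_not_adj hne hyz
  have hl₂ := P₂.two_le_length_of_not_adj hne hyz
  have hy₁ : y ∉ P₁.support.tail :=
    (List.nodup_cons.mp (P₁.cons_tail_support ▸ hP₁.support_nodup)).1
  have hz₂ : z ∉ P₂.reverse.support.tail :=
    (List.nodup_cons.mp (P₂.reverse.cons_tail_support ▸ hP₂.reverse.support_nodup)).1
  have hacross : ∀ u ∈ P₁.support, ∀ v ∈ P₂.support, G.Adj u v →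
      s(u, v) ∈ P₁.edges ∨ s(u, v) ∈ P₂.edges := by
    intro u hu v hv huv
    rcases hcross u hu v hv huv with hu₂ | hv₁
    exacts [.inr (hc₂.mem_edges hu₂ hv huv), .inl (hc₁.mem_edges hu hv₁ huv)]
  refine ⟨hP₁.isCycle_append hP₂.reverse (fun v hv₁ hv₂ => ?_) (by omega),
    by simp; omega, fun u hu v hv huv => ?_⟩
  · have hv₂' : v ∈ P₂.support := by simpa using List.mem_of_mem_tail hv₂
    rcases hmeet v (List.mem_of_mem_tail hv₁) hv₂' with rfl | rfl
    exacts [hy₁ hv₁, hz₂ hv₂]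
  · simp only [Walk.mem_support_append_iff, Walk.support_reverse, List.mem_reverse] at hu hv
    simp only [Walk.edges_append, Walk.edges_reverse, List.mem_append, List.mem_reverse]
    rcases hu with hu | hu <;> rcases hv with hv | hv
    · exact .inl (hc₁.mem_edges hu hv huv)
    · exact hacross u hu v hv huv
    · rw [Sym2.eq_swap]; exact hacross v hv u hu huv.symm
    · exact .inr (hc₂.mem_edges hu hv huv)

lemma containsTheta_or_containsWheel_of_isHole (hP₁ : P₁.IsPath) (hP₂ : P₂.IsPath) (hne : y ≠ z)
    (hyz : ¬ G.Adj y z) (hmeet : ∀ v ∈ P₁.support, v ∈ P₂.support → v = y ∨ v = z)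
    (hhole : IsHole G (P₁.append P₂.reverse)) (hx₁ : x ∉ P₁.support) (hx₂ : x ∉ P₂.support)
    (hxy : G.Adj x y) (hxz : G.Adj x z) : ContainsTheta G ∨ ContainsWheel G := by
  set c := P₁.append P₂.reverse
  have hc : ∀ v, v ∈ c.support ↔ v ∈ P₁.support ∨ v ∈ P₂.support := by
    simp [c, Walk.mem_support_append_iff]
  by_cases hthird : ∃ t ∈ c.support, t ≠ y ∧ t ≠ z ∧ G.Adj x t
  · obtain ⟨t, htc, hty, htz, hxt⟩ := hthird
    exact .inr ⟨y, c, x, y, z, t, hhole, by simp [hc, hx₁, hx₂], c.start_mem_support,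
      (hc z).2 (.inl P₁.end_mem_support), htc, hne, hty.symm, htz.symm, hxy, hxz, hxt⟩
  have hxnbr : ∀ v ∈ c.support, G.Adj x v → v = y ∨ v = z := by
    intro v hv hxv
    by_contra! h
    exact hthird ⟨v, hv, h.1, h.2, hxv⟩
  refine .inl ⟨y, z, P₁, P₂, .cons hxy.symm (.cons hxz .nil), hne, hP₁, hP₂,
    by simp [Walk.isPath_def, hxy.ne', hxz.ne, hne], P₁.two_le_length_of_not_adj hne hyz,
    P₂.two_le_length_of_not_adj hne hyz, by simp, hmeet, ?_, ?_, ?_⟩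
  · intro v hv₁ hv₃
    simp only [Walk.support_cons, Walk.support_nil, List.mem_cons, List.not_mem_nil] at hv₃
    rcases hv₃ with rfl | rfl | rfl | h
    exacts [.inl rfl, absurd hv₁ hx₁, .inr rfl, h.elim]
  · intro v hv₂ hv₃
    simp only [Walk.support_cons, Walk.support_nil, List.mem_cons, List.not_mem_nil] at hv₃
    rcases hv₃ with rfl | rfl | rfl | h
    exacts [.inl rfl, absurd hv₂ hx₂, .inr rfl, h.elim]
  · have hmem : ∀ w, (w ∈ P₁.support ∨ w ∈ P₂.support ∨
        w ∈ (Walk.cons hxy.symm (.cons hxz .nil)).support) → w = x ∨ w ∈ c.support := by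
      intro w hw
      simp only [Walk.support_cons, Walk.support_nil, List.mem_cons, List.not_mem_nil] at hw
      rcases hw with hw | hw | rfl | rfl | rfl | h
      exacts [.inr ((hc w).2 (.inl hw)), .inr ((hc w).2 (.inr hw)), .inr c.start_mem_support,
        .inl rfl, .inr ((hc _).2 (.inl P₁.end_mem_support)), h.elim]
    intro u v hu hv huv
    rcases hmem u hu with rfl | huc <;> rcases hmem v hv with rfl | hvc
    · exact absurd huv (G.irrefl)
    · rcases hxnbr v hvc huv with rfl | rfl <;> simp [Sym2.eq_swap]
    · rcases hxnbr u huc huv.symm with rfl | rfl <;> simp [Sym2.eq_swap]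
    · have := hhole.2.2 u huc v hvc huv
      simp only [c, Walk.edges_append, Walk.edges_reverse, List.mem_append,
        List.mem_reverse] at this
      tauto

end Hole

section StarCutset

variable {A B S : Set V} {x y z : V}

lemma IsCutsetSplit.containsTheta_or_containsWheel (hsplit : IsCutsetSplit G A S B)
    (hx : x ∈ S) (hy : y ∈ S) (hz : z ∈ S) (hne : y ≠ z) (hyz : ¬ G.Adj y z)
    (hxy : G.Adj x y) (hxz : G.Adj x z)
    (hA : ReachableWithin G (insert y (insert z A)) y z)
    (hB : ReachableWithin G (insert y (insert z B)) y z) :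
    ContainsTheta G ∨ ContainsWheel G := by
  obtain ⟨-, -, hAS, hAB, hSB, -, hno⟩ := hsplit
  obtain ⟨P₁, hP₁, hc₁, hX₁⟩ := hA.exists_isPath_isChordless
  obtain ⟨P₂, hP₂, hc₂, hX₂⟩ := hB.exists_isPath_isChordless
  simp only [Set.mem_insert_iff] at hX₁ hX₂
  have hS_A : ∀ v ∈ S, v ∉ A := fun _ hv => Set.disjoint_right.mp hAS hv
  have hS_B : ∀ v ∈ S, v ∉ B := fun _ hv => Set.disjoint_left.mp hSB hv
  have hmeet : ∀ v ∈ P₁.support, v ∈ P₂.support → v = y ∨ v = z := by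
    intro v hv₁ hv₂
    have : v ∈ A → v ∉ B := fun h => Set.disjoint_left.mp hAB h
    have := hX₁ v hv₁
    have := hX₂ v hv₂
    tauto
  have hcross : ∀ u ∈ P₁.support, ∀ v ∈ P₂.support, G.Adj u v →
      u ∈ P₂.support ∨ v ∈ P₁.support := by
    intro u hu v hv huv
    rcases hX₁ u hu with rfl | rfl | huA
    · exact .inl P₂.start_mem_support
    · exact .inl P₂.end_mem_support
    rcases hX₂ v hv with rfl | rfl | hvB
    · exact .inr P₁.start_mem_support
    · exact .inr P₁.end_mem_support
    · exact absurd huv (hno u huA v hvB)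
  have hx₁ : x ∉ P₁.support := fun h => by
    rcases hX₁ x h with rfl | rfl | hxA
    exacts [G.irrefl hxy, G.irrefl hxz, hS_A x hx hxA]
  have hx₂ : x ∉ P₂.support := fun h => by
    rcases hX₂ x h with rfl | rfl | hxB
    exacts [G.irrefl hxy, G.irrefl hxz, hS_B x hx hxB]
  exact containsTheta_or_containsWheel_of_isHole hP₁ hP₂ hne hyz hmeet
    (isHole_append_reverse hP₁ hP₂ hc₁ hc₂ hne hyz hmeet hcross) hx₁ hx₂ hxy hxz

def IsStarCutset (G : SimpleGraph V) (S : Set V) : Prop :=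
  (∃ A B, IsCutsetSplit G A S B) ∧ ∃ x ∈ S, ∀ y ∈ S, y ≠ x → G.Adj x y

theorem isClique_of_minimal_isStarCutset (hTheta : ¬ ContainsTheta G)
    (hWheel : ¬ ContainsWheel G) (hS : Minimal (IsStarCutset G) S) : G.IsClique S := by
  obtain ⟨⟨A, B, hsplit⟩, x, hx, hstar⟩ := hS.prop
  have hnot : ∀ t ∈ S, t ≠ x → ¬ ∃ A' B', IsCutsetSplit G A' (S \ {t}) B' := by
    rintro t ht htx hcut
    refine hS.not_prop_of_ssubset (Set.sdiff_singleton_ssubset.mpr ht)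
      ⟨hcut, x, ⟨hx, htx.symm⟩, fun y hy hyx => hstar y hy.1 hyx⟩
  intro y hy z hz hne
  obtain rfl | hyx := eq_or_ne y x
  · exact hstar z hz hne.symm
  obtain rfl | hzx := eq_or_ne z x
  · exact (hstar y hy hyx).symm
  by_contra hyz
  have hnot_y := hnot y hy hyx
  have hnot_z := hnot z hz hzx
  exact (hsplit.containsTheta_or_containsWheel hx hy hz hne hyz (hstar y hy hyx)
    (hstar z hz hzx) (hsplit.reachableWithin_insert_insert hnot_y hnot_z)
    (hsplit.symm.reachableWithin_insert_insert hnot_y hnot_z)).elim hTheta hWheel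

end StarCutset

/-- If a (theta, wheel)-free graph G has a star cutset, then G has a clique cutset. -/
theorem stmt3 {V : Type u} [Fintype V] (G : SimpleGraph V)
    (hTheta : ¬ ContainsTheta G) (hWheel : ¬ ContainsWheel G)
    (hStar : HasStarCutset G) :
    HasCliqueCutset G := by
  obtain ⟨S, A, B, -, hsplit, hcentre⟩ := hStar
  obtain ⟨T, hT⟩ :=
    exists_minimal_of_wellFoundedLT (IsStarCutset G) ⟨S, ⟨A, B, hsplit⟩, hcentre⟩
  obtain ⟨A', B', hsplit'⟩ := hT.prop.1
  exact ⟨T, A', B', isClique_of_minimal_isStarCutset hTheta hWheel hT, hsplit'⟩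
end

section
/- Every (wheel, diamond, claw)-free graph is isomorphic to the line graph L(R) of some triangle-free chordless graph R. -/
open SimpleGraph

universe u

variable {V : Type u}

/-!
Build the root graph `R` of Krausz: one vertex for every maximal clique of `G`, one private
vertex for every vertex of `G` lying in a single maximal clique, and for each `v` the edge
joining its two "ends". Diamond-freeness makes two maximal cliques share at most one vertex and,
together with claw-freeness, puts every vertex in at most two of them, which is what makes
`v ↦ edge` an isomorphism `G ≃g L(R)`. Every triangle of `G` lies in a maximal clique, an end
common to its three edges, so `R` has no triangle. Finally, a cycle of `R` of length at least 4
is a hole of `L(R)`, and a chord `xy` is a vertex of `L(R)` adjacent to the (at least three)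
cycle edges at `x` and `y`: a wheel.
-/

section Wheels

variable {V' : Type*} {G : SimpleGraph V} {G' : SimpleGraph V'}

lemma IsHole.map (f : G ↪g G') {v : V} {c : G.Walk v v} (hc : IsHole G c) :
    IsHole G' (c.map f.toHom) := by
  obtain ⟨hcyc, hlen, hchord⟩ := hc
  refine ⟨(Walk.isCycle_map_iff_of_injective f.injective).2 hcyc, by simpa using hlen, ?_⟩
  simp only [Walk.support_map, Walk.edges_map, List.mem_map]
  rintro _ ⟨x, hx, rfl⟩ _ ⟨y, hy, rfl⟩ hxy
  exact ⟨s(x, y), hchord x hx y hy (f.map_adj_iff.1 hxy), rfl⟩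

lemma ContainsWheel.map (f : G ↪g G') (h : ContainsWheel G) : ContainsWheel G' := by
  obtain ⟨w, c, x, y₁, y₂, y₃, hc, hx, h₁, h₂, h₃, h₁₂, h₁₃, h₂₃, hx₁, hx₂, hx₃⟩ := h
  refine ⟨f w, c.map f.toHom, f x, f y₁, f y₂, f y₃, hc.map f, ?_, ?_, ?_, ?_,
    f.injective.ne h₁₂, f.injective.ne h₁₃, f.injective.ne h₂₃,
    f.map_adj_iff.2 hx₁, f.map_adj_iff.2 hx₂, f.map_adj_iff.2 hx₃⟩ <;>
  simp [Walk.support_map, f.injective.eq_iff, hx, h₁, h₂, h₃]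

end Wheels

namespace SimpleGraph.Walk

variable {W : Type*} {R : SimpleGraph W}

def lineSupport {u v : W} (c : R.Walk u v) : List R.edgeSet :=
  c.darts.map fun d => ⟨d.edge, d.edge_mem⟩

section LineSupport

variable {u v : W} {c : R.Walk u v}

@[simp]
lemma length_lineSupport : c.lineSupport.length = c.length := by
  simp [lineSupport]

lemma coe_getElem_lineSupport {i : ℕ} (hi : i < c.lineSupport.length) :
    (c.lineSupport[i] : Sym2 W) = s(c.getVert i, c.getVert (i + 1)) := by
  simp [lineSupport, darts_getElem_eq_getVert, Dart.edge]

lemma mem_lineSupport {e : R.edgeSet} : e ∈ c.lineSupport ↔ (e : Sym2 W) ∈ c.edges := by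
  simp [lineSupport, edges, Subtype.ext_iff]

lemma IsTrail.nodup_lineSupport (hc : c.IsTrail) : c.lineSupport.Nodup := by
  refine List.Nodup.of_map Subtype.val ?_
  rw [lineSupport, List.map_map]
  exact hc.edges_nodup

lemma IsTrail.isChain_lineSupport (hc : c.IsTrail) : c.lineSupport.IsChain R.lineGraph.Adj := by
  rw [List.isChain_iff_getElem]
  intro i hi
  refine lineGraph_adj_iff_exists.2 ⟨fun h => ?_, c.getVert (i + 1), ?_, ?_⟩
  · have := (List.Nodup.getElem_inj_iff hc.nodup_lineSupport).1 h
    omega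
  · simp [coe_getElem_lineSupport]
  · simp [coe_getElem_lineSupport]

end LineSupport

lemma IsCycle.cyclically_adjacent_of_adj_lineSupport {u : W} {c : R.Walk u u} (hc : c.IsCycle)
    {i k : ℕ} (hik : i < k) (hk : k < c.lineSupport.length)
    (hadj : R.lineGraph.Adj c.lineSupport[i] c.lineSupport[k]) :
    k = i + 1 ∨ (i = 0 ∧ k = c.length - 1) := by
  obtain ⟨-, w, hwi, hwk⟩ := lineGraph_adj_iff_exists.1 hadj
  rw [coe_getElem_lineSupport, Sym2.mem_iff] at hwi hwk
  rw [length_lineSupport] at hk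
  -- `getVert` is injective both on `[0, length - 1]` and on `[1, length]`
  have inj := hc.getVert_injOn
  have inj' := hc.getVert_injOn'
  simp only [Set.InjOn, Set.mem_ofPred_eq] at inj inj'
  rcases hwi with rfl | rfl <;> rcases hwk with h | h
  · have := inj' (by omega) (by omega) h; omega
  · rcases Nat.eq_zero_or_pos i with rfl | hi
    · rw [getVert_zero, eq_comm, hc.getVert_endpoint_iff (by omega)] at h
      omega
    · have := inj (by omega) (by omega) h; omega
  · have := inj (by omega) (by omega) h; omega
  · have := inj (by omega) (by omega) h; omega

lemma IsCycle.lineGraph_adj_getLast_head_lineSupport {u : W} {c : R.Walk u u}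
    (hc : c.IsCycle) (hne : c.lineSupport ≠ []) :
    R.lineGraph.Adj (c.lineSupport.getLast hne) (c.lineSupport.head hne) := by
  have hn := hc.three_le_length
  rw [List.getLast_eq_getElem, List.head_eq_getElem]
  refine lineGraph_adj_iff_exists.2 ⟨fun h => ?_, u, ?_, ?_⟩
  · have := (List.Nodup.getElem_inj_iff hc.isTrail.nodup_lineSupport).1 h
    simp only [length_lineSupport] at this
    omega
  · simp [coe_getElem_lineSupport, Nat.sub_add_cancel (by omega : 1 ≤ c.length)]
  · simp [coe_getElem_lineSupport]

lemma IsCycle.exists_isChordless_isCycle_lineGraph {u : W} {c : R.Walk u u} (hc : c.IsCycle) :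
    ∃ (e : R.edgeSet) (p : R.lineGraph.Walk e e), p.IsCycle ∧ p.length = c.length ∧
      (∀ f, f ∈ p.support ↔ (f : Sym2 W) ∈ c.edges) ∧ p.IsChordless := by
  set S := c.lineSupport
  have hn := hc.three_le_length
  have hlen : S.length = c.length := length_lineSupport
  have hne : S ≠ [] := List.ne_nil_of_length_pos (by omega)
  set p := cons (hc.lineGraph_adj_getLast_head_lineSupport hne)
    (ofSupport S hne hc.isTrail.isChain_lineSupport)
  have hsupp : p.support = S.getLast hne :: S := by simp [p, S]
  have hmem : ∀ f, f ∈ p.support ↔ f ∈ S := fun f => by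
    rw [hsupp, List.mem_cons, or_iff_right_of_imp (· ▸ List.getLast_mem hne)]
  refine ⟨_, p, ?_, ?_, fun f => (hmem f).trans mem_lineSupport, ?_⟩
  · rw [isCycle_iff_isPath_tail_and_le_length]
    refine ⟨?_, by simp [p]; omega⟩
    simpa [p, isPath_def] using hc.isTrail.nodup_lineSupport
  · simp [p]; omega
  · rw [isChordless_iff_forall_mem_edges]
    have hedge : ∀ i k (hik : i < k) (hk : k < S.length), R.lineGraph.Adj S[i] S[k] →
        s(S[i], S[k]) ∈ p.edges := by
      intro i k hik hk hadj
      rcases hc.cyclically_adjacent_of_adj_lineSupport hik hk hadj with rfl | ⟨rfl, rfl⟩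
      · refine infix_support_iff_mem_edges.1 (Or.inl ?_)
        rw [hsupp]
        exact (List.isChain_iff_getElem.1 (List.isChain_isInfix S) i hk).trans
          (List.suffix_cons _ _).isInfix
      · refine infix_support_iff_mem_edges.1 (Or.inr ⟨[], S.tail, ?_⟩)
        have hlast : S.getLast hne = S[c.length - 1] := by simp [List.getLast_eq_getElem, hlen]
        rw [hsupp, hlast, ← List.head_eq_getElem hne]
        simp
    intro a b ha hb hab
    obtain ⟨i, hi, rfl⟩ := List.getElem_of_mem ((hmem a).1 ha)
    obtain ⟨k, hk, rfl⟩ := List.getElem_of_mem ((hmem b).1 hb)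
    rcases lt_trichotomy i k with h | rfl | h
    · exact hedge i k h hk hab
    · exact absurd rfl hab.ne
    · rw [Sym2.eq_swap]
      exact hedge k i h hi hab.symm

lemma IsCycle.exists_mem_edges_of_mem_support {u x : W} {c : R.Walk u u} (hc : c.IsCycle)
    (hx : x ∈ c.support) : ∃ a b, a ≠ b ∧ s(x, a) ∈ c.edges ∧ s(x, b) ∈ c.edges := by
  obtain ⟨a, b, hab, hnb⟩ := Set.ncard_eq_two.1 (hc.ncard_neighborSet_toSubgraph_eq_two hx)
  have hxa : c.toSubgraph.Adj x a := by simp [← Subgraph.mem_neighborSet, hnb]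
  have hxb : c.toSubgraph.Adj x b := by simp [← Subgraph.mem_neighborSet, hnb]
  exact ⟨a, b, hab, c.mem_edges_toSubgraph.1 hxa, c.mem_edges_toSubgraph.1 hxb⟩

end SimpleGraph.Walk

section LineGraph

open Walk

variable {W : Type*} {R : SimpleGraph W}

lemma containsWheel_lineGraph_of_chord (hR : R.CliqueFree 3)
    {u x y : W} {c : R.Walk u u} (hc : c.IsCycle) (hx : x ∈ c.support) (hy : y ∈ c.support)
    (hxy : R.Adj x y) (hchord : s(x, y) ∉ c.edges) : ContainsWheel R.lineGraph := by
  have hlen : 4 ≤ c.length := by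
    by_contra h
    obtain ⟨t, ht⟩ := is3Clique_iff_exists_cycle_length_three.2 ⟨u, c, hc, by
      have := hc.three_le_length; omega⟩
    exact hR t ht
  obtain ⟨e, p, hp, hplen, hpsupp, hpch⟩ := hc.exists_isChordless_isCycle_lineGraph
  obtain ⟨a, b, hab, hxa, hxb⟩ := hc.exists_mem_edges_of_mem_support hx
  obtain ⟨d, -, -, hyd, -⟩ := hc.exists_mem_edges_of_mem_support hy
  -- a cycle edge at `x` does not contain `y`, as it would then be the chord
  have hne : ∀ z, s(x, z) ∈ c.edges → s(x, z) ≠ s(y, d) := by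
    rintro z hz h
    obtain rfl : y = z := by
      have : y ∈ s(x, z) := h ▸ Sym2.mem_mk_left y d
      simpa [hxy.ne'] using this
    exact hchord hz
  have hadj : ∀ z w (h : s(z, w) ∈ c.edges), (z = x ∨ z = y) →
      R.lineGraph.Adj ⟨s(x, y), hxy⟩ ⟨s(z, w), c.edges_subset_edgeSet h⟩ := by
    rintro z w h hz
    refine lineGraph_adj_iff_exists.2 ⟨fun h' => hchord ?_, z, ?_, Sym2.mem_mk_left z w⟩
    · rwa [Subtype.mk.inj h']
    · rcases hz with rfl | rfl <;> simp
  refine ⟨e, p, ⟨s(x, y), hxy⟩, ⟨s(x, a), c.edges_subset_edgeSet hxa⟩,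
    ⟨s(x, b), c.edges_subset_edgeSet hxb⟩, ⟨s(y, d), c.edges_subset_edgeSet hyd⟩,
    ⟨hp, hplen ▸ hlen, fun _ h₁ _ h₂ => isChordless_iff_forall_mem_edges.1 hpch h₁ h₂⟩,
    by simpa [hpsupp], by simpa [hpsupp], by simpa [hpsupp], by simpa [hpsupp], ?_, ?_, ?_,
    hadj x a hxa (Or.inl rfl), hadj x b hxb (Or.inl rfl), hadj y d hyd (Or.inr rfl)⟩
  · exact fun h => hab (Sym2.congr_right.1 (congrArg Subtype.val h))
  · exact fun h => hne a hxa (congrArg Subtype.val h)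
  · exact fun h => hne b hxb (congrArg Subtype.val h)

lemma chordlessGraph_of_not_containsWheel_lineGraph (hR : R.CliqueFree 3) (h : ¬ ContainsWheel R.lineGraph) : ChordlessGraph R := by
  intro u c hc x hx y hy hxy
  by_contra hchord
  exact h (containsWheel_lineGraph_of_chord hR hc hx hy hxy hchord)

lemma cliqueFree_three_of_lineGraph_triangles_concurrent
    (h : ∀ e₁ e₂ e₃ : R.edgeSet, R.lineGraph.Adj e₁ e₂ → R.lineGraph.Adj e₁ e₃ →
      R.lineGraph.Adj e₂ e₃ → ∃ x, x ∈ (e₁ : Sym2 W) ∧ x ∈ (e₂ : Sym2 W) ∧ x ∈ (e₃ : Sym2 W)) :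
    R.CliqueFree 3 := by
  classical
  intro t ht
  obtain ⟨x, y, z, hxy, hxz, hyz, -⟩ := is3Clique_iff.1 ht
  obtain ⟨w, h₁, h₂, h₃⟩ := h ⟨s(x, y), hxy⟩ ⟨s(x, z), hxz⟩ ⟨s(y, z), hyz⟩
    (lineGraph_adj_iff_exists.2 ⟨fun h => hyz.ne (Sym2.congr_right.1 (Subtype.mk.inj h)),
      x, by simp, by simp⟩)
    (lineGraph_adj_iff_exists.2 ⟨fun h => hxz.ne (Sym2.congr_right.1
      (Sym2.eq_swap.trans (Subtype.mk.inj h))), y, by simp, by simp⟩)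
    (lineGraph_adj_iff_exists.2 ⟨fun h => hxy.ne (Sym2.congr_left.1 (Subtype.mk.inj h)),
      z, by simp, by simp⟩)
  simp only [Sym2.mem_iff] at h₁ h₂ h₃
  rcases h₁ with rfl | rfl
  · rcases h₃ with h | h
    exacts [hxy.ne h, hxz.ne h]
  · rcases h₂ with h | h
    exacts [hxy.ne h.symm, hyz.ne h]

end LineGraph

section MaximalCliques

variable {G : SimpleGraph V} {K₁ K₂ K₃ : Set V} {v a b : V}

lemma SimpleGraph.isClique_triple {x y z : V} (hxy : G.Adj x y) (hxz : G.Adj x z)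
    (hyz : G.Adj y z) : G.IsClique {x, y, z} :=
  isClique_insert.2 ⟨isClique_pair.2 fun _ => hyz, by rintro w (rfl | rfl) - <;> assumption⟩

lemma inter_subsingleton_of_maximal_isClique (hD : ¬ ContainsDiamond G)
    (h₁ : Maximal G.IsClique K₁) (h₂ : Maximal G.IsClique K₂) (hne : K₁ ≠ K₂) :
    (K₁ ∩ K₂).Subsingleton := by
  rintro a ⟨ha₁, ha₂⟩ b ⟨hb₁, hb₂⟩
  by_contra hab
  obtain ⟨x, hx₁, hx₂⟩ := Set.not_subset.1 fun h => hne (h₁.eq_of_le h₂.1 h)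
  obtain ⟨y, hy₂, hxy, hnxy⟩ : ∃ y ∈ K₂, x ≠ y ∧ ¬ G.Adj x y := by
    by_contra! h
    exact hx₂ (h₂.mem_of_prop_insert (isClique_insert.2 ⟨h₂.1, h⟩))
  have hy₁ : y ∉ K₁ := fun hy₁ => hnxy (h₁.1 hx₁ hy₁ hxy)
  have hxa := ne_of_mem_of_not_mem ha₂ hx₂
  have hxb := ne_of_mem_of_not_mem hb₂ hx₂
  have hya := ne_of_mem_of_not_mem ha₁ hy₁
  have hyb := ne_of_mem_of_not_mem hb₁ hy₁
  exact hD ⟨x, y, a, b, hxy, hxa.symm, hxb.symm, hya.symm, hyb.symm, hab, hnxy,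
    h₁.1 hx₁ ha₁ hxa.symm, h₁.1 hx₁ hb₁ hxb.symm, h₂.1 hy₂ ha₂ hya.symm,
    h₂.1 hy₂ hb₂ hyb.symm, h₁.1 ha₁ hb₁ hab⟩

lemma exists_mem_ne_of_maximal_isClique (h₁ : Maximal G.IsClique K₁) (h₂ : G.IsClique K₂)
    (hne : K₁ ≠ K₂) (hv : v ∈ K₂) : ∃ x ∈ K₁, x ≠ v := by
  by_contra! h
  exact hne (h₁.eq_of_le h₂ fun x hx => h x hx ▸ hv)

lemma ne_of_mem_maximal_isClique (hD : ¬ ContainsDiamond G) (h₁ : Maximal G.IsClique K₁)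
    (h₂ : Maximal G.IsClique K₂) (hne : K₁ ≠ K₂) (hv₁ : v ∈ K₁) (hv₂ : v ∈ K₂) (ha : a ∈ K₁)
    (hb : b ∈ K₂) (hav : a ≠ v) : a ≠ b := by
  rintro rfl
  exact hav (inter_subsingleton_of_maximal_isClique hD h₁ h₂ hne ⟨ha, hb⟩ ⟨hv₁, hv₂⟩)

lemma not_adj_of_mem_maximal_isClique [Finite V] (hD : ¬ ContainsDiamond G)
    (h₁ : Maximal G.IsClique K₁) (h₂ : Maximal G.IsClique K₂) (hne : K₁ ≠ K₂) (hv₁ : v ∈ K₁)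
    (hv₂ : v ∈ K₂) (ha : a ∈ K₁) (hb : b ∈ K₂) (hav : a ≠ v) (hbv : b ≠ v) : ¬ G.Adj a b := by
  intro hab
  obtain ⟨M, hvabM, hM⟩ :=
    Finite.exists_le_maximal (isClique_triple (h₁.1 hv₁ ha hav.symm) (h₂.1 hv₂ hb hbv.symm) hab)
  have hvM : v ∈ M := hvabM (by simp)
  have h₁M : K₁ = M := by
    by_contra h
    exact hav (inter_subsingleton_of_maximal_isClique hD h₁ hM h ⟨ha, hvabM (by simp)⟩ ⟨hv₁, hvM⟩)
  have h₂M : K₂ = M := by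
    by_contra h
    exact hbv (inter_subsingleton_of_maximal_isClique hD h₂ hM h ⟨hb, hvabM (by simp)⟩ ⟨hv₂, hvM⟩)
  exact hne (h₁M.trans h₂M.symm)

lemma eq_or_eq_or_eq_of_maximal_isClique [Finite V] (hD : ¬ ContainsDiamond G)
    (hC : ¬ ContainsClaw G) (h₁ : Maximal G.IsClique K₁) (h₂ : Maximal G.IsClique K₂)
    (h₃ : Maximal G.IsClique K₃) (hv₁ : v ∈ K₁) (hv₂ : v ∈ K₂) (hv₃ : v ∈ K₃) :
    K₁ = K₂ ∨ K₁ = K₃ ∨ K₂ = K₃ := by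
  by_contra! ⟨h₁₂, h₁₃, h₂₃⟩
  obtain ⟨x₁, hx₁, hx₁v⟩ := exists_mem_ne_of_maximal_isClique h₁ h₂.1 h₁₂ hv₂
  obtain ⟨x₂, hx₂, hx₂v⟩ := exists_mem_ne_of_maximal_isClique h₂ h₁.1 h₁₂.symm hv₁
  obtain ⟨x₃, hx₃, hx₃v⟩ := exists_mem_ne_of_maximal_isClique h₃ h₁.1 h₁₃.symm hv₁
  exact hC ⟨v, x₁, x₂, x₃, ne_of_mem_maximal_isClique hD h₁ h₂ h₁₂ hv₁ hv₂ hx₁ hx₂ hx₁v,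
    ne_of_mem_maximal_isClique hD h₁ h₃ h₁₃ hv₁ hv₃ hx₁ hx₃ hx₁v,
    ne_of_mem_maximal_isClique hD h₂ h₃ h₂₃ hv₂ hv₃ hx₂ hx₃ hx₂v,
    h₁.1 hv₁ hx₁ hx₁v.symm, h₂.1 hv₂ hx₂ hx₂v.symm, h₃.1 hv₃ hx₃ hx₃v.symm,
    not_adj_of_mem_maximal_isClique hD h₁ h₂ h₁₂ hv₁ hv₂ hx₁ hx₂ hx₁v hx₂v,
    not_adj_of_mem_maximal_isClique hD h₁ h₃ h₁₃ hv₁ hv₃ hx₁ hx₃ hx₁v hx₃v,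
    not_adj_of_mem_maximal_isClique hD h₂ h₃ h₂₃ hv₂ hv₃ hx₂ hx₃ hx₂v hx₃v⟩

end MaximalCliques

section RootGraph

variable {G : SimpleGraph V}

/-- The ends of the edge of the root graph that represents `v`: the maximal cliques through `v`,
together with the private vertex `inr v` when there is only one of them. -/
def IsRootEnd (G : SimpleGraph V) (v : V) : Set V ⊕ V → Prop
  | .inl K => Maximal G.IsClique K ∧ v ∈ K
  | .inr w => w = v ∧ {K | Maximal G.IsClique K ∧ v ∈ K}.Subsingleton

def rootGraph (G : SimpleGraph V) : SimpleGraph (Set V ⊕ V) where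
  Adj a b := a ≠ b ∧ ∃ v, IsRootEnd G v a ∧ IsRootEnd G v b
  symm := ⟨fun _ _ ⟨hne, v, ha, hb⟩ => ⟨hne.symm, v, hb, ha⟩⟩
  loopless := ⟨fun _ h => h.1 rfl⟩

lemma adj_iff_exists_isRootEnd [Finite V] {u v : V} :
    G.Adj u v ↔ u ≠ v ∧ ∃ a, IsRootEnd G u a ∧ IsRootEnd G v a := by
  refine ⟨fun h => ?_, ?_⟩
  · obtain ⟨M, huvM, hM⟩ := Finite.exists_le_maximal (isClique_pair.2 fun _ => h)
    exact ⟨h.ne, .inl M, ⟨hM, huvM (by simp)⟩, ⟨hM, huvM (by simp)⟩⟩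
  · rintro ⟨hne, K | w, hu, hv⟩
    · exact hu.1.1 hu.2 hv.2 hne
    · exact absurd (hu.1.symm.trans hv.1) hne

lemma eq_of_isRootEnd (hD : ¬ ContainsDiamond G) {u v : V} {a b : Set V ⊕ V} (hab : a ≠ b)
    (hua : IsRootEnd G u a) (hub : IsRootEnd G u b) (hva : IsRootEnd G v a)
    (hvb : IsRootEnd G v b) : u = v := by
  rcases a with K₁ | w
  · rcases b with K₂ | w
    · exact inter_subsingleton_of_maximal_isClique hD hua.1 hub.1 (fun h => hab (h ▸ rfl))
        ⟨hua.2, hub.2⟩ ⟨hva.2, hvb.2⟩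
    · exact hub.1.symm.trans hvb.1
  · exact hua.1.symm.trans hva.1

lemma exists_isRootEnd_iff_eq_or_eq [Finite V] (hD : ¬ ContainsDiamond G) (hC : ¬ ContainsClaw G)
    (v : V) : ∃ a b, a ≠ b ∧ ∀ c, IsRootEnd G v c ↔ c = a ∨ c = b := by
  obtain ⟨K₁, hvK₁, hK₁⟩ := Finite.exists_le_maximal (G.isClique_singleton v)
  have hv₁ : v ∈ K₁ := hvK₁ rfl
  by_cases h : {K | Maximal G.IsClique K ∧ v ∈ K}.Subsingleton
  · refine ⟨.inl K₁, .inr v, Sum.inl_ne_inr, ?_⟩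
    rintro (K | w)
    · simpa using ⟨fun hK => h hK ⟨hK₁, hv₁⟩, fun hK => hK ▸ ⟨hK₁, hv₁⟩⟩
    · simp [IsRootEnd, h]
  · obtain ⟨K₂, ⟨hK₂, hv₂⟩, hne⟩ : ∃ K₂, (Maximal G.IsClique K₂ ∧ v ∈ K₂) ∧ K₁ ≠ K₂ := by
      by_contra! h'
      exact h fun K hK K' hK' => (h' K hK).symm.trans (h' K' hK')
    refine ⟨.inl K₁, .inl K₂, fun h => hne (Sum.inl_injective h), ?_⟩
    rintro (K | w)
    · simp only [IsRootEnd, Sum.inl.injEq]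
      refine ⟨fun ⟨hK, hv⟩ => ?_, ?_⟩
      · rcases eq_or_eq_or_eq_of_maximal_isClique hD hC hK hK₁ hK₂ hv hv₁ hv₂ with h | h | h
        exacts [Or.inl h, Or.inr h, absurd h hne]
      · rintro (rfl | rfl)
        exacts [⟨hK₁, hv₁⟩, ⟨hK₂, hv₂⟩]
    · simp [IsRootEnd, h]

lemma exists_iso_lineGraph_rootGraph [Finite V] (hD : ¬ ContainsDiamond G)
    (hC : ¬ ContainsClaw G) :
    ∃ φ : G ≃g (rootGraph G).lineGraph, ∀ v a, a ∈ (φ v : Sym2 (Set V ⊕ V)) ↔ IsRootEnd G v a := by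
  choose a b hab hends using exists_isRootEnd_iff_eq_or_eq hD hC
  let f (v : V) : (rootGraph G).edgeSet :=
    ⟨s(a v, b v), hab v, v, (hends v _).2 (.inl rfl), (hends v _).2 (.inr rfl)⟩
  have hf (v : V) (c : Set V ⊕ V) : c ∈ (f v : Sym2 (Set V ⊕ V)) ↔ IsRootEnd G v c := by
    simp [f, hends]
  have hinj : f.Injective := fun u v huv => by
    have hv := hf v
    rw [← huv] at hv
    exact eq_of_isRootEnd hD (hab u) ((hf u _).1 (by simp [f])) ((hf u _).1 (by simp [f]))
      ((hv _).1 (by simp [f])) ((hv _).1 (by simp [f]))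
  have hsurj : f.Surjective := by
    rintro ⟨e, he⟩
    induction e with | _ x y => ?_
    obtain ⟨hxy, v, hx, hy⟩ := he
    exact ⟨v, Subtype.ext ((Sym2.mem_and_mem_iff hxy).1 ⟨(hf v x).2 hx, (hf v y).2 hy⟩)⟩
  refine ⟨⟨Equiv.ofBijective f ⟨hinj, hsurj⟩, fun {u v} => ?_⟩, hf⟩
  change (rootGraph G).lineGraph.Adj (f u) (f v) ↔ G.Adj u v
  simp only [lineGraph_adj_iff_exists, hinj.ne_iff, hf]
  exact adj_iff_exists_isRootEnd.symm

lemma rootGraph_cliqueFree_three [Finite V] (hD : ¬ ContainsDiamond G) (hC : ¬ ContainsClaw G) :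
    (rootGraph G).CliqueFree 3 := by
  obtain ⟨φ, hφ⟩ := exists_iso_lineGraph_rootGraph hD hC
  refine cliqueFree_three_of_lineGraph_triangles_concurrent fun e₁ e₂ e₃ h₁₂ h₁₃ h₂₃ => ?_
  obtain ⟨u₁, rfl⟩ := φ.surjective e₁
  obtain ⟨u₂, rfl⟩ := φ.surjective e₂
  obtain ⟨u₃, rfl⟩ := φ.surjective e₃
  rw [φ.map_adj_iff] at h₁₂ h₁₃ h₂₃
  -- the three vertices lie in a common maximal clique, which is an end of all three edges
  obtain ⟨M, hsub, hM⟩ := Finite.exists_le_maximal (isClique_triple h₁₂ h₁₃ h₂₃)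
  exact ⟨.inl M, (hφ _ _).2 ⟨hM, hsub (by simp)⟩, (hφ _ _).2 ⟨hM, hsub (by simp)⟩,
    (hφ _ _).2 ⟨hM, hsub (by simp)⟩⟩

end RootGraph

/-- Every (wheel, diamond, claw)-free graph is isomorphic to the line graph L(R) of
some triangle-free chordless graph R. -/
theorem stmt16 {V : Type u} [Fintype V] (G : SimpleGraph V)
    (hWheel : ¬ ContainsWheel G) (hDiamond : ¬ ContainsDiamond G)
    (hClaw : ¬ ContainsClaw G) :
    ∃ (W : Type u) (R : SimpleGraph W), Finite W ∧ R.CliqueFree 3 ∧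
      ChordlessGraph R ∧ Nonempty (G ≃g R.lineGraph) := by
  obtain ⟨φ, -⟩ := exists_iso_lineGraph_rootGraph hDiamond hClaw
  have hR := rootGraph_cliqueFree_three hDiamond hClaw
  refine ⟨Set V ⊕ V, rootGraph G, inferInstance, hR, ?_, ⟨φ⟩⟩
  exact chordlessGraph_of_not_containsWheel_lineGraph hR fun h =>
    hWheel (h.map φ.symm.toEmbedding)
end
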